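/- arXiv:0801.0616 — 5 statements merged into one kernel-verified Lean document; each statement's English description precedes it below -/
import Mathlib

section
/- Let D be a locally nilpotent ℂ-derivation of the polynomial ring ℂ[X_1, …, X_n], and let d := min{m ∈ ℕ : D^[m](X_i) = 0 for all i = 1, …, n}. Then for every j = 1, …, n, Σ_{m=0}^{d} (−1)^m · C(d,m) · exp(mD)(X_j) = 0; that is, the polynomial automorphism F := (exp(D)(X_1), …, exp(D)(X_n)) of ℂ^n satisfies Σ_{m=0}^{d} (−1)^m C(d,m) F^[m] = 0. -/
open Classical in
/-- The exponential `exp(D)(a) = Σ_{i=0}^{∞} (1/i!) • D^[i](a)` of a derivation `D`;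
for each `a` on which `D` is eventually nilpotent this is the (finite) sum of all
possibly nonzero terms. -/
noncomputable def expMap (k : Type*) {A : Type*} [Field k] [CharZero k] [CommRing A]
    [Algebra k A] (D : Derivation k A A) (a : A) : A :=
  if h : ∃ n : ℕ, (⇑D)^[n] a = 0 then
    ∑ i ∈ Finset.range (Nat.find h), ((Nat.factorial i : k)⁻¹) • (⇑D)^[i] a
  else a

/-- Alternating binomial moment identity: `∑ (-1)^m C(d,m) m^i = 0` for `i < d`. -/
lemma moment_zero : ∀ i d : ℕ, i < d →
    ∑ m ∈ Finset.range (d + 1), (-1 : ℂ) ^ m * (d.choose m : ℂ) * (m : ℂ) ^ i = 0 := by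
  intro i
  induction i using Nat.strong_induction_on with
  | _ i IH =>
    intro d hid
    obtain ⟨e, rfl⟩ : ∃ e, d = e + 1 := ⟨d - 1, by omega⟩
    rcases Nat.eq_zero_or_pos i with hi0 | hipos
    · subst hi0
      have h := Int.alternating_sum_range_choose_of_ne (n := e + 1) (by omega)
      have h2 := congrArg (Int.cast : ℤ → ℂ) h
      push_cast at h2
      simpa using h2
    · obtain ⟨k, rfl⟩ : ∃ k, i = k + 1 := ⟨i - 1, by omega⟩
      have hke : k < e := by omega
      rw [Finset.sum_range_succ']
      simp only [Nat.cast_zero, zero_pow (Nat.succ_ne_zero k), mul_zero, add_zero]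
      have hterm : ∀ m ∈ Finset.range (e + 1),
          (-1 : ℂ) ^ (m + 1) * (((e + 1).choose (m + 1) : ℕ) : ℂ) * ((m + 1 : ℕ) : ℂ) ^ (k + 1)
          = ∑ t ∈ Finset.range (k + 1),
              (-((e : ℂ) + 1) * (k.choose t : ℂ)) *
                ((-1 : ℂ) ^ m * (e.choose m : ℂ) * (m : ℂ) ^ t) := by
        intro m _
        have hc : (((e + 1).choose (m + 1) : ℕ) : ℂ) * ((m : ℂ) + 1)
            = ((e : ℂ) + 1) * (e.choose m : ℂ) := by
          have h := Nat.add_one_mul_choose_eq e m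
          have h2 := congrArg (Nat.cast : ℕ → ℂ) h
          push_cast at h2
          linear_combination -h2
        have hbin : ((m : ℂ) + 1) ^ k
            = ∑ t ∈ Finset.range (k + 1), (m : ℂ) ^ t * (k.choose t : ℂ) := by
          simpa using add_pow (m : ℂ) 1 k
        have hcast : ((m + 1 : ℕ) : ℂ) = (m : ℂ) + 1 := by push_cast; ring
        rw [hcast]
        calc (-1 : ℂ) ^ (m + 1) * (((e + 1).choose (m + 1) : ℕ) : ℂ) * ((m : ℂ) + 1) ^ (k + 1)
            = (-1 : ℂ) ^ (m + 1) * ((((e + 1).choose (m + 1) : ℕ) : ℂ) * ((m : ℂ) + 1))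
                * ((m : ℂ) + 1) ^ k := by ring
          _ = (-1 : ℂ) ^ (m + 1) * (((e : ℂ) + 1) * (e.choose m : ℂ))
                * ∑ t ∈ Finset.range (k + 1), (m : ℂ) ^ t * (k.choose t : ℂ) := by
              rw [hc, hbin]
          _ = ∑ t ∈ Finset.range (k + 1),
              (-((e : ℂ) + 1) * (k.choose t : ℂ)) *
                ((-1 : ℂ) ^ m * (e.choose m : ℂ) * (m : ℂ) ^ t) := by
              rw [Finset.mul_sum]
              refine Finset.sum_congr rfl fun t _ => by ring
      calc ∑ m ∈ Finset.range (e + 1),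
            (-1 : ℂ) ^ (m + 1) * (((e + 1).choose (m + 1) : ℕ) : ℂ) * ((m + 1 : ℕ) : ℂ) ^ (k + 1)
          = ∑ m ∈ Finset.range (e + 1), ∑ t ∈ Finset.range (k + 1),
              (-((e : ℂ) + 1) * (k.choose t : ℂ)) *
                ((-1 : ℂ) ^ m * (e.choose m : ℂ) * (m : ℂ) ^ t) :=
            Finset.sum_congr rfl hterm
        _ = ∑ t ∈ Finset.range (k + 1), ∑ m ∈ Finset.range (e + 1),
              (-((e : ℂ) + 1) * (k.choose t : ℂ)) *
                ((-1 : ℂ) ^ m * (e.choose m : ℂ) * (m : ℂ) ^ t) := Finset.sum_comm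
        _ = 0 := by
            refine Finset.sum_eq_zero fun t ht => ?_
            rw [← Finset.mul_sum, IH t (by simpa using ht) e (lt_of_lt_of_le (Finset.mem_range.mp ht) hke), mul_zero]

lemma iter_eq_zero_of_le {A : Type*} {f : A → A} {z : A} (hf : f z = z) {a : A} {N i : ℕ}
    (hN : f^[N] a = z) (h : N ≤ i) : f^[i] a = z := by
  obtain ⟨c, rfl⟩ := Nat.exists_eq_add_of_le h
  rw [Nat.add_comm, Function.iterate_add_apply, hN, Function.iterate_fixed hf c]

lemma smul_iter {A : Type*} [CommRing A] [Algebra ℂ A] (D : Derivation ℂ A A) (m i : ℕ)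
    (a : A) : (⇑(m • D))^[i] a = (m : ℂ) ^ i • (⇑D)^[i] a := by
  induction i generalizing a with
  | zero => simp
  | succ i ih =>
      rw [Function.iterate_succ_apply', Function.iterate_succ_apply', ih]
      have h1 : (m • D) ((m : ℂ) ^ i • (⇑D)^[i] a)
          = m • ((m : ℂ) ^ i • D ((⇑D)^[i] a)) := by
        simp [Derivation.map_smul]
      rw [h1, ← Nat.cast_smul_eq_nsmul ℂ m, smul_smul, ← pow_succ']

open MvPolynomial in
lemma expMap_smul_eq {n : ℕ} (D : Derivation ℂ (MvPolynomial (Fin n) ℂ) (MvPolynomial (Fin n) ℂ))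
    (d : ℕ) (j : Fin n) (hdj : (⇑D)^[d] (X j) = 0) (m : ℕ) :
    expMap ℂ (m • D) (X j)
      = ∑ i ∈ Finset.range (d + 1),
          ((m : ℂ) ^ i * ((Nat.factorial i : ℂ))⁻¹) • (⇑D)^[i] (X j) := by
  have hmd : (⇑(m • D))^[d] (X j) = 0 := by rw [smul_iter, hdj, smul_zero]
  have hex : ∃ N : ℕ, (⇑(m • D))^[N] (X j) = 0 := ⟨d, hmd⟩
  have hg : ∀ N : ℕ, (⇑(m • D))^[N] (X j) = 0 → ∀ i : ℕ, (N ≤ i ∨ d ≤ i) →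
      ((m : ℂ) ^ i * ((Nat.factorial i : ℂ))⁻¹) • (⇑D)^[i] (X j) = 0 := by
    intro N hN i hi
    have hz : (⇑(m • D))^[i] (X j) = 0 := by
      cases hi with
      | inl h => exact iter_eq_zero_of_le (map_zero (m • D)) hN h
      | inr h => exact iter_eq_zero_of_le (map_zero (m • D)) hmd h
    rw [smul_iter] at hz
    rw [mul_comm, mul_smul, hz, smul_zero]
  have key : ∀ N : ℕ, (⇑(m • D))^[N] (X j) = 0 →
      ∑ i ∈ Finset.range N, ((Nat.factorial i : ℂ))⁻¹ • (⇑(m • D))^[i] (X j)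
        = ∑ i ∈ Finset.range (d + 1),
            ((m : ℂ) ^ i * ((Nat.factorial i : ℂ))⁻¹) • (⇑D)^[i] (X j) := by
    intro N hN
    calc ∑ i ∈ Finset.range N, ((Nat.factorial i : ℂ))⁻¹ • (⇑(m • D))^[i] (X j)
        = ∑ i ∈ Finset.range N,
            ((m : ℂ) ^ i * ((Nat.factorial i : ℂ))⁻¹) • (⇑D)^[i] (X j) := by
          refine Finset.sum_congr rfl fun i _ => ?_
          rw [smul_iter, smul_smul, mul_comm]
      _ = ∑ i ∈ Finset.range (max N (d + 1)),
            ((m : ℂ) ^ i * ((Nat.factorial i : ℂ))⁻¹) • (⇑D)^[i] (X j) := by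
          refine Finset.sum_subset (Finset.range_subset_range.mpr (le_max_left _ _)) ?_
          intro i _ hi
          exact hg N hN i (Or.inl (by simp only [Finset.mem_range, not_lt] at hi; exact hi))
      _ = ∑ i ∈ Finset.range (d + 1),
            ((m : ℂ) ^ i * ((Nat.factorial i : ℂ))⁻¹) • (⇑D)^[i] (X j) := by
          refine (Finset.sum_subset (Finset.range_subset_range.mpr (le_max_right _ _)) ?_).symm
          intro i _ hi
          exact hg N hN i (Or.inr (by simp only [Finset.mem_range, not_lt] at hi; omega))
  rw [expMap, dif_pos hex]
  exact key _ (@Nat.find_spec _ (fun a => Classical.propDecidable _) hex)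

open MvPolynomial in
/-- Main theorem, first half: if `D` is a locally nilpotent derivation of
`ℂ[X_1,…,X_n]` and `d` is the least `m` with `D^[m](X_i) = 0` for all `i`, then every
component of `Σ_{m=0}^{d} (−1)^m C(d,m) F^[m]` vanishes, where `(F^[m])_j = exp(mD)(X_j)`. -/
theorem exp_automorphism_annihilated
    (n : ℕ) (D : Derivation ℂ (MvPolynomial (Fin n) ℂ) (MvPolynomial (Fin n) ℂ))
    (hD : ∀ a : MvPolynomial (Fin n) ℂ, ∃ m : ℕ, (⇑D)^[m] a = 0)
    (d : ℕ) (hd : ∀ i : Fin n, (⇑D)^[d] (X i) = 0)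
    (hmin : ∀ m : ℕ, (∀ i : Fin n, (⇑D)^[m] (X i) = 0) → d ≤ m) :
    ∀ j : Fin n,
      ∑ m ∈ Finset.range (d + 1),
        ((-1 : ℂ) ^ m * (d.choose m : ℂ)) • expMap ℂ (m • D) (X j) = 0 := by
  intro j
  have hdj := hd j
  calc ∑ m ∈ Finset.range (d + 1),
        ((-1 : ℂ) ^ m * (d.choose m : ℂ)) • expMap ℂ (m • D) (X j)
      = ∑ m ∈ Finset.range (d + 1), ∑ i ∈ Finset.range (d + 1),
          (((-1 : ℂ) ^ m * (d.choose m : ℂ)) * ((m : ℂ) ^ i * ((Nat.factorial i : ℂ))⁻¹))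
            • (⇑D)^[i] (X j) := by
        refine Finset.sum_congr rfl fun m _ => ?_
        rw [expMap_smul_eq D d j hdj m, Finset.smul_sum]
        exact Finset.sum_congr rfl fun i _ => smul_smul _ _ _
    _ = ∑ i ∈ Finset.range (d + 1), ∑ m ∈ Finset.range (d + 1),
          (((-1 : ℂ) ^ m * (d.choose m : ℂ)) * ((m : ℂ) ^ i * ((Nat.factorial i : ℂ))⁻¹))
            • (⇑D)^[i] (X j) := Finset.sum_comm
    _ = 0 := by
        refine Finset.sum_eq_zero fun i hi => ?_
        rcases lt_or_eq_of_le (Nat.lt_succ_iff.mp (Finset.mem_range.mp hi)) with hlt | heq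
        · have hs : ∑ m ∈ Finset.range (d + 1),
              ((-1 : ℂ) ^ m * (d.choose m : ℂ)) * ((m : ℂ) ^ i * ((Nat.factorial i : ℂ))⁻¹)
              = (∑ m ∈ Finset.range (d + 1),
                  (-1 : ℂ) ^ m * (d.choose m : ℂ) * (m : ℂ) ^ i) * ((Nat.factorial i : ℂ))⁻¹ := by
            rw [Finset.sum_mul]
            exact Finset.sum_congr rfl fun m _ => by ring
          rw [← Finset.sum_smul, hs, moment_zero i d hlt, zero_mul, zero_smul]
        · subst heq
          simp [hdj]
end

section
/- Let D be a locally nilpotent ℂ-derivation of ℂ[X_1, …, X_n] and let d := min{m ∈ ℕ : D^[m](X_i) = 0 for all i = 1, …, n}. If p ∈ ℂ[T] is a nonzero polynomial of degree strictly less than d, then there exists j ∈ {1, …, n} such that Σ_{m=0}^{deg p} (coeff of T^m in p) · exp(mD)(X_j) ≠ 0. (Equivalently, no nonzero polynomial of degree < d annihilates the automorphism F = (exp(D)(X_1), …, exp(D)(X_n)).) -/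
open Finset

theorem Function.iterate_eq_zero_of_le {M : Type*} [Zero M] {f : M → M} (hf : f 0 = 0)
    {a : M} {N n : ℕ} (hN : f^[N] a = 0) (hn : N ≤ n) : f^[n] a = 0 := by
  rw [← Nat.sub_add_cancel hn, Function.iterate_add_apply, hN, Function.iterate_fixed hf]

theorem LinearMap.eq_zero_of_sum_smul_iterate_eq_zero {R M : Type*} [Semiring R] [IsDomain R]
    [AddCommMonoid M] [Module R M] [Module.IsTorsionFree R M] (f : M →ₗ[R] M) {v : M} {d : ℕ}
    (hd : f^[d] v = 0) (hd' : f^[d - 1] v ≠ 0) {c : ℕ → R}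
    (hc : ∑ i ∈ Finset.range d, c i • f^[i] v = 0) : ∀ i < d, c i = 0 := by
  classical
  by_contra! hex
  let k := Nat.find hex
  obtain ⟨hkd, hck⟩ : k < d ∧ c k ≠ 0 := Nat.find_spec hex
  -- `f^[d-1-k]` kills every term but the `k`-th one: below `k` by minimality, above by `hd`
  have hsum := congrArg (f ^ (d - 1 - k)) hc
  simp only [map_sum, map_smul, Module.End.pow_apply, ← Function.iterate_add_apply,
    map_zero] at hsum
  rw [sum_eq_single_of_mem k (Finset.mem_range.mpr hkd), show d - 1 - k + k = d - 1 by omega]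
    at hsum
  · exact hck ((smul_eq_zero.mp hsum).resolve_right hd')
  · intro i hi hik
    rcases lt_or_gt_of_ne hik with hlt | hgt
    · rw [not_not.mp fun hci => Nat.find_min hex hlt ⟨Finset.mem_range.mp hi, hci⟩, zero_smul]
    · rw [Function.iterate_eq_zero_of_le (map_zero f) hd (by omega), smul_zero]

theorem eq_zero_of_forall_sum_range_mul_pow_eq_zero {R : Type*} [CommRing R] [IsDomain R]
    [CharZero R] {n : ℕ} {w : ℕ → R} (h : ∀ i < n, ∑ m ∈ range n, w m * (m : R) ^ i = 0) :
    ∀ m < n, w m = 0 := by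
  have hfin : (fun m : Fin n => w m) = 0 := by
    refine Matrix.eq_zero_of_forall_pow_sum_mul_pow_eq_zero
      (f := fun m : Fin n => (m : R)) (fun a b hab => Fin.ext (Nat.cast_injective hab)) ?_
    intro i
    rw [Fin.sum_univ_eq_sum_range (fun m => w m * (m : R) ^ (i : ℕ))]
    exact h i i.isLt
  exact fun m hm => congrFun hfin ⟨m, hm⟩

theorem Derivation.iterate_nsmul_apply {k A : Type*} [CommSemiring k] [CommRing A] [Algebra k A]
    (D : Derivation k A A) (m i : ℕ) (a : A) :
    (⇑(m • D))^[i] a = (m : k) ^ i • (⇑D)^[i] a := by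
  induction i with
  | zero => simp
  | succ i ih =>
    rw [Function.iterate_succ_apply', Function.iterate_succ_apply', ih, Derivation.smul_apply,
      ← Nat.cast_smul_eq_nsmul k, Derivation.map_smul, smul_smul, pow_succ']

section expMap

variable {k A : Type*} [Field k] [CharZero k] [CommRing A] [Algebra k A]

theorem expMap_eq_sum_range (D : Derivation k A A) {a : A} {N : ℕ} (hN : (⇑D)^[N] a = 0) :
    expMap k D a = ∑ i ∈ range N, ((Nat.factorial i : k)⁻¹) • (⇑D)^[i] a := by
  classical
  have h : ∃ n : ℕ, (⇑D)^[n] a = 0 := ⟨N, hN⟩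
  rw [expMap, dif_pos h]
  refine sum_subset (range_subset_range.mpr (Nat.find_le hN)) fun i _ hi => ?_
  rw [Function.iterate_eq_zero_of_le (map_zero D) (Nat.find_spec h)
    (by simpa using hi), smul_zero]

theorem expMap_nsmul_eq_sum_range (D : Derivation k A A) {a : A} {N : ℕ}
    (hN : (⇑D)^[N] a = 0) (m : ℕ) :
    expMap k (m • D) a = ∑ i ∈ range N, ((Nat.factorial i : k)⁻¹ * (m : k) ^ i) • (⇑D)^[i] a := by
  rw [expMap_eq_sum_range (m • D) (by rw [D.iterate_nsmul_apply, hN, smul_zero])]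
  simp only [D.iterate_nsmul_apply, smul_smul]

theorem sum_smul_expMap_nsmul (D : Derivation k A A) {a : A} {N : ℕ} (hN : (⇑D)^[N] a = 0)
    (s : Finset ℕ) (w : ℕ → k) :
    ∑ m ∈ s, w m • expMap k (m • D) a =
      ∑ i ∈ range N, ((Nat.factorial i : k)⁻¹ * ∑ m ∈ s, w m * (m : k) ^ i) • (⇑D)^[i] a := by
  simp only [expMap_nsmul_eq_sum_range D hN, smul_sum, smul_smul, mul_sum, sum_smul]
  rw [sum_comm]
  exact sum_congr rfl fun i _ => sum_congr rfl fun m _ => by ring_nf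

end expMap

open MvPolynomial in
theorem exp_automorphism_minimal_degree_general
    (n : ℕ) (D : Derivation ℂ (MvPolynomial (Fin n) ℂ) (MvPolynomial (Fin n) ℂ))
    (d : ℕ) (hd : ∀ i : Fin n, (⇑D)^[d] (X i) = 0)
    (hmin : ∀ m : ℕ, (∀ i : Fin n, (⇑D)^[m] (X i) = 0) → d ≤ m)
    (p : Polynomial ℂ) (hp : p ≠ 0) (hdeg : p.natDegree < d) :
    ∃ j : Fin n,
      ∑ m ∈ Finset.range (p.natDegree + 1),
        p.coeff m • expMap ℂ (m • D) (X j) ≠ 0 := by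
  by_contra! hann
  obtain ⟨j, hj⟩ : ∃ j : Fin n, (⇑D)^[d - 1] (X j) ≠ 0 := by
    by_contra! h
    have := hmin (d - 1) h
    omega
  have hmoment : ∀ i < d, ∑ m ∈ range (p.natDegree + 1), p.coeff m * (m : ℂ) ^ i = 0 := by
    intro i hi
    have hsum := (sum_smul_expMap_nsmul D (hd j) _ p.coeff).symm.trans (hann j)
    have hcoef := LinearMap.eq_zero_of_sum_smul_iterate_eq_zero
      (D : MvPolynomial (Fin n) ℂ →ₗ[ℂ] MvPolynomial (Fin n) ℂ) (hd j) hj hsum i hi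
    exact (mul_eq_zero.mp hcoef).resolve_left (by simp [Nat.factorial_ne_zero])
  have hcoeff := eq_zero_of_forall_sum_range_mul_pow_eq_zero
    (fun i hi => hmoment i (by omega)) p.natDegree (Nat.lt_succ_self _)
  exact hp (Polynomial.leadingCoeff_eq_zero.mp hcoeff)

open MvPolynomial in
/-- Main theorem, second half: if `D` is a locally nilpotent derivation of
`ℂ[X_1,…,X_n]` and `d` is the least `m` with `D^[m](X_i) = 0` for all `i`, then no
nonzero polynomial `p ∈ ℂ[T]` of degree `< d` annihilates the exponential
automorphism `F` (whose iterates satisfy `(F^[m])_j = exp(mD)(X_j)`). -/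
theorem exp_automorphism_minimal_degree
    (n : ℕ) (D : Derivation ℂ (MvPolynomial (Fin n) ℂ) (MvPolynomial (Fin n) ℂ))
    (hD : ∀ a : MvPolynomial (Fin n) ℂ, ∃ m : ℕ, (⇑D)^[m] a = 0)
    (d : ℕ) (hd : ∀ i : Fin n, (⇑D)^[d] (X i) = 0)
    (hmin : ∀ m : ℕ, (∀ i : Fin n, (⇑D)^[m] (X i) = 0) → d ≤ m)
    (p : Polynomial ℂ) (hp : p ≠ 0) (hdeg : p.natDegree < d) :
    ∃ j : Fin n,
      ∑ m ∈ Finset.range (p.natDegree + 1),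
        p.coeff m • expMap ℂ (m • D) (X j) ≠ 0 :=
  exp_automorphism_minimal_degree_general n D d hd hmin p hp hdeg
end

section
/- Let D be a locally nilpotent ℂ-derivation of ℂ[X_1, …, X_n] and let d := min{m ∈ ℕ : D^[m](X_i) = 0 for all i = 1, …, n}, with d ≥ 1. Then for every j = 1, …, n, exp(−D)(X_j) = Σ_{m=0}^{d−1} (−1)^m · C(d, m+1) · exp(mD)(X_j); equivalently, the inverse of the exponential automorphism F = (exp(D)(X_1), …, exp(D)(X_n)) is F^{−1} = Σ_{m=0}^{d−1} (−1)^m C(d, m+1) F^[m]. -/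
/-!
For `c ∈ ℂ`, `p(c) := exp(c D)(X_j) = Σ_{i<d} c^i • D^[i](X_j) / i!` is a polynomial in `c` of
degree `< d`, so its `d`-th forward difference at `-1` vanishes:
`Σ_{k≤d} (-1)^(d-k) C(d, k) p(k-1) = 0`. Splitting off `k = 0` gives
`p(-1) = Σ_{m<d} (-1)^m C(d, m+1) p(m)`.
-/

open Finset
open scoped Nat

theorem sum_range_neg_one_pow_mul_choose_succ_mul_pow {R : Type*} [CommRing R] {d i : ℕ}
    (hi : i < d) :
    ∑ m ∈ range d, (-1 : R) ^ m * d.choose (m + 1) * (m : R) ^ i = (-1) ^ i := by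
  have hsign : ∀ m ∈ range d, (-1 : R) ^ d * (-1) ^ (d - (m + 1)) = -(-1) ^ m := by
    intro m hm
    obtain ⟨k, rfl⟩ := Nat.exists_eq_add_of_le (mem_range.mp hm)
    rw [Nat.add_sub_cancel_left, pow_add, pow_succ, mul_assoc, ← mul_pow]
    simp
  have h : ∑ m ∈ range d, (-1 : R) ^ d * (-1) ^ (d - (m + 1)) * d.choose (m + 1) * (m : R) ^ i
      + (-1) ^ d * (-1) ^ d * (-1) ^ i = 0 := by
    simpa [fwdDiff_iter_eq_sum_shift, sum_range_succ', mul_add, mul_sum, ← mul_assoc] using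
      congr_arg ((-1 : R) ^ d * ·) (congr_fun (fwdDiff_iter_pow_eq_zero_of_lt (R := R) hi) (-1))
  rw [sum_congr rfl fun m hm => by rw [hsign m hm], ← mul_pow] at h
  simpa [sum_neg_distrib, neg_add_eq_zero] using h

theorem sum_range_neg_one_pow_mul_choose_succ_smul_sum_pow_smul {R M : Type*} [CommRing R]
    [AddCommGroup M] [Module R M] (d : ℕ) (v : ℕ → M) :
    ∑ m ∈ range d, ((-1 : R) ^ m * d.choose (m + 1)) • ∑ i ∈ range d, (m : R) ^ i • v i =
      ∑ i ∈ range d, (-1 : R) ^ i • v i := by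
  simp_rw [smul_sum, smul_smul]
  rw [sum_comm]
  refine sum_congr rfl fun i hi => ?_
  rw [← sum_smul, sum_range_neg_one_pow_mul_choose_succ_mul_pow (mem_range.mp hi)]

namespace Derivation

theorem iterate_smul_apply {R A : Type*} [CommSemiring R] [CommSemiring A] [Algebra R A]
    (D : Derivation R A A) (c : R) (i : ℕ) (a : A) :
    (⇑(c • D))^[i] a = c ^ i • (⇑D)^[i] a := by
  induction i with
  | zero => simp
  | succ i ih =>
    rw [Function.iterate_succ_apply', ih, Function.iterate_succ_apply', smul_apply, map_smul,
      smul_smul, pow_succ']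

variable {k A : Type*} [Field k] [CharZero k] [CommRing A] [Algebra k A]

theorem expMap_eq_sum_range {D : Derivation k A A} {a : A} {K : ℕ} (hK : (⇑D)^[K] a = 0) :
    expMap k D a = ∑ i ∈ range K, (i ! : k)⁻¹ • (⇑D)^[i] a := by
  classical
  have h : ∃ n, (⇑D)^[n] a = 0 := ⟨K, hK⟩
  rw [expMap, dif_pos h]
  refine sum_subset (range_subset_range.mpr (Nat.find_le hK)) fun i _ hi => ?_
  obtain ⟨l, rfl⟩ := Nat.exists_eq_add_of_le (not_lt.mp (mt mem_range.mpr hi))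
  rw [add_comm, Function.iterate_add_apply, Nat.find_spec h,
    Function.iterate_fixed (map_zero D), smul_zero]

theorem expMap_smul_eq_sum_range {D : Derivation k A A} {a : A} {K : ℕ} (hK : (⇑D)^[K] a = 0)
    (c : k) : expMap k (c • D) a = ∑ i ∈ range K, c ^ i • (i ! : k)⁻¹ • (⇑D)^[i] a := by
  rw [expMap_eq_sum_range (by rw [iterate_smul_apply, hK, smul_zero])]
  simp_rw [iterate_smul_apply, smul_comm (c ^ _)]

end Derivation

open MvPolynomial in
theorem exp_automorphism_inverse_formula_general
    (n : ℕ) (D : Derivation ℂ (MvPolynomial (Fin n) ℂ) (MvPolynomial (Fin n) ℂ))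
    (d : ℕ) (hd : ∀ i : Fin n, (⇑D)^[d] (X i) = 0) :
    ∀ j : Fin n,
      expMap ℂ (-D) (X j)
        = ∑ m ∈ Finset.range d,
            ((-1 : ℂ) ^ m * (d.choose (m + 1) : ℂ)) • expMap ℂ (m • D) (X j) := by
  intro j
  simp_rw [← neg_one_smul ℂ D, ← Nat.cast_smul_eq_nsmul ℂ _ D,
    Derivation.expMap_smul_eq_sum_range (hd j)]
  exact (sum_range_neg_one_pow_mul_choose_succ_smul_sum_pow_smul d _).symm

open MvPolynomial in
/-- Corollary: if `D` is a locally nilpotent derivation of `ℂ[X_1,…,X_n]` and `d ≥ 1` is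
the least `m` with `D^[m](X_i) = 0` for all `i`, then the inverse of the exponential
automorphism `F` is given by `F^{−1} = Σ_{m=0}^{d−1} (−1)^m C(d, m+1) F^[m]`, i.e.
componentwise `exp(−D)(X_j) = Σ_{m=0}^{d−1} (−1)^m C(d, m+1) exp(mD)(X_j)`. -/
theorem exp_automorphism_inverse_formula
    (n : ℕ) (D : Derivation ℂ (MvPolynomial (Fin n) ℂ) (MvPolynomial (Fin n) ℂ))
    (hD : ∀ a : MvPolynomial (Fin n) ℂ, ∃ m : ℕ, (⇑D)^[m] a = 0)
    (d : ℕ) (hd1 : 1 ≤ d) (hd : ∀ i : Fin n, (⇑D)^[d] (X i) = 0)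
    (hmin : ∀ m : ℕ, (∀ i : Fin n, (⇑D)^[m] (X i) = 0) → d ≤ m) :
    ∀ j : Fin n,
      expMap ℂ (-D) (X j)
        = ∑ m ∈ Finset.range d,
            ((-1 : ℂ) ^ m * (d.choose (m + 1) : ℂ)) • expMap ℂ (m • D) (X j) :=
  exp_automorphism_inverse_formula_general n D d hd
end

section
/- Let D be the ℂ-derivation of ℂ[X, Y, Z] given by D = −2Yσ·∂/∂X + Zσ·∂/∂Y, where σ = XZ + Y². Then D(σ) = 0, D^[3](X) = D^[3](Y) = D^[3](Z) = 0, and D^[2](X) ≠ 0 (so 3 is the least m with D^[m] vanishing on all three variables); moreover D is locally nilpotent. -/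
/-!
The polynomial `σ = XZ + Y²` is a constant of `D`, so `D = σ Δ` with the triangular derivation
`Δ = -2Y ∂/∂X + Z ∂/∂Y`: `D Z = 0`, `D² Y = 0`, `D² X = -2Zσ²` and `D³ X = 0`. By the Leibniz rule the
elements killed by some power of a derivation form a subalgebra, which here contains the generators.
-/

open MvPolynomial Function

namespace Derivation

variable {R A : Type*} [CommSemiring R] [CommSemiring A] [Algebra R A] (D : Derivation R A A)

@[simp]
theorem map_ofNat (n : ℕ) [n.AtLeastTwo] : D (no_index (OfNat.ofNat n : A)) = 0 := by
  rw [← Nat.cast_ofNat, D.map_natCast]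

theorem iterate_eq_zero_of_le {m n : ℕ} (h : m ≤ n) {a : A} (ha : D^[m] a = 0) :
    D^[n] a = 0 := by
  obtain ⟨k, rfl⟩ := Nat.exists_eq_add_of_le h
  rw [Nat.add_comm, iterate_add_apply, ha, iterate_map_zero]

theorem iterate_mul_eq_zero_of_add_eq {k m n : ℕ} {a b : A} (hk : m + n = k)
    (ha : D^[m] a = 0) (hb : D^[n] b = 0) : D^[k] (a * b) = 0 := by
  induction k generalizing m n a b with
  | zero =>
    obtain rfl : m = 0 := by omega
    simp_all
  | succ k ih =>
    rcases m with _ | m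
    · simp_all
    rcases n with _ | n
    · simp_all
    rw [iterate_succ_apply, D.leibniz, iterate_map_add, smul_eq_mul, smul_eq_mul,
      ih (m := m + 1) (n := n) (by omega) ha hb, ih (m := n + 1) (n := m) (by omega) hb ha,
      add_zero]

def nilSubalgebra : Subalgebra R A where
  carrier := {a | ∃ n, D^[n] a = 0}
  add_mem' := by
    rintro a b ⟨m, ha⟩ ⟨n, hb⟩
    exact ⟨max m n, by rw [iterate_map_add, D.iterate_eq_zero_of_le (le_max_left m n) ha,
      D.iterate_eq_zero_of_le (le_max_right m n) hb, add_zero]⟩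
  mul_mem' := by
    rintro a b ⟨m, ha⟩ ⟨n, hb⟩
    exact ⟨m + n, D.iterate_mul_eq_zero_of_add_eq rfl ha hb⟩
  algebraMap_mem' r := ⟨1, D.map_algebraMap r⟩

theorem mem_nilSubalgebra {a : A} : a ∈ D.nilSubalgebra ↔ ∃ n, D^[n] a = 0 := Iff.rfl

end Derivation

theorem MvPolynomial.exists_iterate_eq_zero_of_forall_X {R ι : Type*} [CommSemiring R]
    (D : Derivation R (MvPolynomial ι R) (MvPolynomial ι R)) (hX : ∀ i, ∃ n, D^[n] (X i) = 0)
    (a : MvPolynomial ι R) : ∃ n, D^[n] a = 0 := by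
  have htop : D.nilSubalgebra = ⊤ := by
    rw [eq_top_iff, ← adjoin_range_X, Algebra.adjoin_le_iff]
    rintro _ ⟨i, rfl⟩
    exact hX i
  exact D.mem_nilSubalgebra.1 (htop ▸ Algebra.mem_top)

namespace NagataDerivation

variable {R : Type*} [CommRing R] {D : Derivation R (MvPolynomial (Fin 3) R) (MvPolynomial (Fin 3) R)}
  {σ : MvPolynomial (Fin 3) R}

theorem map_sigma (hσ : σ = X 0 * X 2 + X 1 ^ 2) (hX : D (X 0) = -2 * X 1 * σ)
    (hY : D (X 1) = X 2 * σ) (hZ : D (X 2) = 0) : D σ = 0 := by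
  rw [hσ, map_add, pow_two, D.leibniz, D.leibniz, hX, hY, hZ]
  simp only [smul_eq_mul]
  ring

theorem map_mul_sigma_pow (hDσ : D σ = 0) (f : MvPolynomial (Fin 3) R) (k : ℕ) :
    D (f * σ ^ k) = D f * σ ^ k := by
  rw [D.leibniz, D.leibniz_pow, hDσ]
  simp [mul_comm]

theorem iterate_two_X_zero (hDσ : D σ = 0) (hX : D (X 0) = -2 * X 1 * σ)
    (hY : D (X 1) = X 2 * σ) : D^[2] (X 0) = -2 * X 2 * σ ^ 2 := by
  rw [iterate_succ_apply, iterate_one, hX, ← pow_one σ, map_mul_sigma_pow hDσ, D.leibniz, hY]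
  simp only [smul_eq_mul, map_neg, Derivation.map_ofNat, neg_zero, mul_zero, add_zero]
  ring

theorem iterate_three_X (hDσ : D σ = 0) (hX : D (X 0) = -2 * X 1 * σ)
    (hY : D (X 1) = X 2 * σ) (hZ : D (X 2) = 0) (i : Fin 3) : D^[3] (X i) = 0 := by
  match i with
  | 0 =>
    rw [iterate_succ_apply', iterate_two_X_zero hDσ hX hY, map_mul_sigma_pow hDσ, D.leibniz, hZ]
    simp
  | 1 =>
    rw [iterate_succ_apply, iterate_succ_apply, iterate_one, hY, ← pow_one σ,
      map_mul_sigma_pow hDσ, hZ, zero_mul, map_zero]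
  | 2 => rw [iterate_succ_apply, hZ, iterate_map_zero]

theorem iterate_two_X_zero_ne_zero [CharZero R] (hσ : σ = X 0 * X 2 + X 1 ^ 2)
    (hX : D (X 0) = -2 * X 1 * σ) (hY : D (X 1) = X 2 * σ) (hZ : D (X 2) = 0) :
    D^[2] (X 0) ≠ 0 := by
  rw [iterate_two_X_zero (map_sigma hσ hX hY hZ) hX hY, hσ]
  intro h
  have := congrArg (MvPolynomial.eval fun _ => (1 : R)) h
  norm_num at this

end NagataDerivation

open MvPolynomial in
/-- For the Nagata derivation `D = −2Yσ ∂/∂X + Zσ ∂/∂Y` of `ℂ[X,Y,Z]`, where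
`σ = XZ + Y²`: `D(σ) = 0`, `D^[3]` kills all three variables, `D^[2](X) ≠ 0`
(so `3` is the least such exponent), and `D` is locally nilpotent. -/
theorem nagata_derivation_properties
    (D : Derivation ℂ (MvPolynomial (Fin 3) ℂ) (MvPolynomial (Fin 3) ℂ))
    (σ : MvPolynomial (Fin 3) ℂ) (hσ : σ = X 0 * X 2 + X 1 ^ 2)
    (hX : D (X 0) = -2 * X 1 * σ)
    (hY : D (X 1) = X 2 * σ)
    (hZ : D (X 2) = 0) :
    D σ = 0 ∧
      (∀ i : Fin 3, (⇑D)^[3] (X i) = 0) ∧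
      (⇑D)^[2] (X 0) ≠ 0 ∧
      (∀ m : ℕ, (∀ i : Fin 3, (⇑D)^[m] (X i) = 0) → 3 ≤ m) ∧
      (∀ a : MvPolynomial (Fin 3) ℂ, ∃ n : ℕ, (⇑D)^[n] a = 0) := by
  have hDσ := NagataDerivation.map_sigma hσ hX hY hZ
  have hD3X := NagataDerivation.iterate_three_X hDσ hX hY hZ
  have hD2X := NagataDerivation.iterate_two_X_zero_ne_zero hσ hX hY hZ
  refine ⟨hDσ, hD3X, hD2X, fun m hm => ?_, exists_iterate_eq_zero_of_forall_X D fun i => ⟨3, hD3X i⟩⟩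
  by_contra! hm3
  exact hD2X (D.iterate_eq_zero_of_le (by omega) (hm 0))
end

section
/- Let g ∈ ℂ[Y, Z] with g ≠ 0 and h ∈ ℂ[Z] with h ≠ 0, set d := 2 + deg_Y g, and let φ be the ℂ-algebra endomorphism of ℂ[X, Y, Z] with φ(X) = X + g(Y, Z), φ(Y) = Y + h(Z), φ(Z) = Z. Then the minimal polynomial of the triangular automorphism F = (X + g(Y,Z), Y + h(Z), Z) of ℂ³ is (T − 1)^d: for each variable w ∈ {X, Y, Z}, Σ_{m=0}^{d} (−1)^m C(d,m) φ^[m](w) = 0, and no nonzero polynomial p ∈ ℂ[T] of degree less than d satisfies Σ_m (coeff of T^m in p)·φ^[m](w) = 0 for all w ∈ {X, Y, Z}. -/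
/-!
Let `N = φ - 1`; it kills `X₂` and sends `X₁ ↦ h`, `X₀ ↦ g`. On polynomials in `X₁` with
coefficients in `ℂ[X₂]`, where `g` and `h` live, `φ` is the Taylor shift `X₁ ↦ X₁ + h`, so `N`
takes a polynomial of `X₁`-degree `r + 1` to one of degree `r`, multiplying the top coefficient
by `(r + 1) h`. With `e = deg_{X₁} g` this gives `N^(e+1) g = 0` and `N^e g = e! hᵉ lc(g) ≠ 0`,
hence `N^d` kills every variable while `N^(d-1) X₀ ≠ 0`. The annihilator of `X₀` in `ℂ[T]` is
principal, contains `(T - 1)^d` but not `(T - 1)^(d-1)`, so it is `((T - 1)^d)`.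
-/

namespace Polynomial

section Semiring

variable {A : Type*} [Semiring A] (a : A)

theorem coeff_taylor_of_natDegree_le {Q : A[X]} {k : ℕ} (hk : Q.natDegree ≤ k) :
    (taylor a Q).coeff k = Q.coeff k := by
  rcases hk.eq_or_lt with rfl | hlt
  · exact coeff_taylor_natDegree a Q
  · rw [coeff_eq_zero_of_natDegree_lt hlt,
      coeff_eq_zero_of_natDegree_lt (by rwa [natDegree_taylor])]

end Semiring

section Ring

variable {A : Type*} [Ring A] (a : A)

theorem natDegree_taylor_sub_le {Q : A[X]} {r : ℕ} (hQ : Q.natDegree ≤ r + 1) :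
    (taylor a Q - Q).natDegree ≤ r :=
  natDegree_le_iff_coeff_eq_zero.mpr fun k hk => by
    rw [coeff_sub, coeff_taylor_of_natDegree_le a (by omega), sub_self]

end Ring

variable {A : Type*} [CommRing A] (a : A)

theorem coeff_taylor_sub_of_natDegree_le {Q : A[X]} {r : ℕ} (hQ : Q.natDegree ≤ r + 1) :
    (taylor a Q - Q).coeff r = (r + 1) * Q.coeff (r + 1) * a := by
  have hasse : hasseDeriv r Q = C (Q.coeff r) + C ((r + 1) * Q.coeff (r + 1)) * X := by
    ext (_ | _ | n) <;> simp only [hasseDeriv_coeff, coeff_add, coeff_C, coeff_C_mul, coeff_X]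
    · simp
    · simp [add_comm 1 r]
    · simp [coeff_eq_zero_of_natDegree_lt (show Q.natDegree < n + 2 + r by omega)]
  rw [coeff_sub, taylor_coeff, hasse]
  simp [mul_comm]

theorem pow_taylor_sub_one_apply_of_natDegree_le {n : ℕ} {Q : A[X]} (hQ : Q.natDegree ≤ n) :
    ((taylor a - 1) ^ n) Q = C (n.factorial * a ^ n * Q.coeff n) := by
  induction n generalizing Q with
  | zero => simpa using eq_C_of_natDegree_le_zero hQ
  | succ n ih =>
    rw [pow_succ, Module.End.mul_apply, LinearMap.sub_apply, Module.End.one_apply,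
      ih (natDegree_taylor_sub_le a hQ), coeff_taylor_sub_of_natDegree_le a hQ]
    push_cast [Nat.factorial_succ]
    ring_nf

theorem pow_taylor_sub_one_apply_eq_zero {n : ℕ} {Q : A[X]} (hQ : Q.natDegree < n) :
    ((taylor a - 1) ^ n) Q = 0 := by
  obtain ⟨m, rfl⟩ := Nat.exists_eq_succ_of_ne_zero (Nat.ne_zero_of_lt hQ)
  rw [pow_succ', Module.End.mul_apply, pow_taylor_sub_one_apply_of_natDegree_le a (by omega),
    LinearMap.sub_apply, taylor_C, Module.End.one_apply, sub_self]

end Polynomial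

namespace Module.End

open Polynomial

theorem sum_range_coeff_smul_iterate_eq_aeval_apply {R M : Type*} [CommSemiring R]
    [AddCommMonoid M] [Module R M] (f : Module.End R M) (p : R[X]) (v : M) :
    ∑ m ∈ Finset.range (p.natDegree + 1), p.coeff m • (⇑f)^[m] v = aeval f p v := by
  simp [aeval_eq_sum_range, LinearMap.sum_apply, coe_pow]

theorem sum_range_neg_one_pow_mul_choose_smul_iterate {R M : Type*} [CommRing R]
    [AddCommGroup M] [Module R M] (f : Module.End R M) (n : ℕ) (v : M) :
    ∑ m ∈ Finset.range (n + 1), ((-1 : R) ^ m * n.choose m) • (⇑f)^[m] v =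
      (-1 : R) ^ n • ((f - 1) ^ n) v := by
  have h : (-1 : R) • (f - 1) = (-1 : R) • f + 1 := by
    rw [neg_one_smul, neg_one_smul, neg_sub, neg_add_eq_sub]
  rw [← LinearMap.smul_apply, ← _root_.smul_pow, h, (Commute.one_right _).add_pow,
    LinearMap.sum_apply]
  refine Finset.sum_congr rfl fun m _ => ?_
  rw [_root_.smul_pow, one_pow, mul_one, mul_apply, natCast_apply, LinearMap.smul_apply,
    map_nsmul, pow_apply, mul_smul, Nat.cast_smul_eq_nsmul]

theorem aeval_apply_ne_zero_of_natDegree_lt {K V : Type*} [Field K] [AddCommGroup V]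
    [Module K V] {f : Module.End K V} {v : V} {π : K[X]} (hπ : Prime π) {k : ℕ}
    (hk : aeval f (π ^ k) v ≠ 0) (hk1 : aeval f (π ^ (k + 1)) v = 0) {p : K[X]} (hp : p ≠ 0)
    (hdeg : p.natDegree < (k + 1) * π.natDegree) : aeval f p v ≠ 0 := by
  classical
  intro hpv
  let I : Ideal K[X] := (Submodule.span K[X] {AEval'.of f v}).annihilator
  have mem_I : ∀ q, q ∈ I ↔ aeval f q v = 0 := fun q => by
    rw [Submodule.mem_annihilator_span_singleton, ← AEval.of_aeval_smul,
      LinearEquiv.map_eq_zero_iff]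
    rfl
  have hgcd : gcd p (π ^ (k + 1)) ∈ I := by
    rw [← Ideal.span_singleton_le_iff_mem, span_gcd, Ideal.span_le, Set.insert_subset_iff,
      Set.singleton_subset_iff]
    exact ⟨(mem_I p).2 hpv, (mem_I _).2 hk1⟩
  obtain ⟨i, -, hi⟩ := (dvd_prime_pow hπ _).1 (gcd_dvd_right p (π ^ (k + 1)))
  have hik : i ≤ k := by
    have := natDegree_le_of_dvd (hi.symm.dvd.trans (gcd_dvd_left _ _)) hp
    rw [natDegree_pow] at this
    nlinarith
  apply hk
  rw [← mem_I, ← Nat.sub_add_cancel hik, pow_add]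
  obtain ⟨c, hc⟩ := hi.dvd
  exact I.mul_mem_left _ (hc ▸ I.mul_mem_right c hgcd)

end Module.End

namespace MvPolynomial

open Polynomial (taylor)

section CommSemiring

variable {R : Type*} [CommSemiring R] {n : ℕ}

/-- A polynomial in `X₁` with coefficients in `R[X₂, …, Xₙ₊₁]`, as an element of
`R[X₀, …, Xₙ₊₁]`: the coefficient variable `X i` becomes `X (i + 2)`. -/
noncomputable def ofPolynomialX1 :
    Polynomial (MvPolynomial (Fin n) R) →ₐ[R] MvPolynomial (Fin (n + 2)) R :=
  (rename Fin.succ).comp (finSuccEquiv R n).symm.toAlgHom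

@[simp] theorem ofPolynomialX1_X :
    ofPolynomialX1 (Polynomial.X : Polynomial (MvPolynomial (Fin n) R)) = X 1 := by
  have : (finSuccEquiv R n).symm Polynomial.X = X 0 :=
    (AlgEquiv.symm_apply_eq _).2 finSuccEquiv_X_zero.symm
  simp [ofPolynomialX1, this]

@[simp] theorem ofPolynomialX1_C_X (i : Fin n) :
    ofPolynomialX1 (Polynomial.C (X i : MvPolynomial (Fin n) R)) = X i.succ.succ := by
  have : (finSuccEquiv R n).symm (Polynomial.C (X i)) = X i.succ :=
    (AlgEquiv.symm_apply_eq _).2 finSuccEquiv_X_succ.symm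
  simp [ofPolynomialX1, this]

theorem ofPolynomialX1_injective : Function.Injective (ofPolynomialX1 (R := R) (n := n)) :=
  (rename_injective _ (Fin.succ_injective _)).comp (finSuccEquiv R n).symm.injective

theorem exists_ofPolynomialX1_eq {q : MvPolynomial (Fin (n + 2)) R} (hq : q.degreeOf 0 = 0) :
    ∃ Q, ofPolynomialX1 Q = q ∧ Q.natDegree = q.degreeOf 1 := by
  obtain ⟨q', rfl⟩ := exists_rename_eq_of_vars_subset_range q Fin.succ (Fin.succ_injective _)
    fun i hi => Fin.exists_succ_eq.2 fun h0 => mem_vars_iff_degreeOf_ne_zero.1 hi (h0 ▸ hq)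
  refine ⟨finSuccEquiv R n q', by simp [ofPolynomialX1], ?_⟩
  rw [natDegree_finSuccEquiv, ← Fin.succ_zero_eq_one,
    degreeOf_rename_of_injective (Fin.succ_injective _)]

theorem exists_ofPolynomialX1_C_eq {q : MvPolynomial (Fin (n + 2)) R} (hq0 : q.degreeOf 0 = 0)
    (hq1 : q.degreeOf 1 = 0) : ∃ a, ofPolynomialX1 (Polynomial.C a) = q := by
  obtain ⟨Q, rfl, hQ⟩ := exists_ofPolynomialX1_eq hq0
  exact ⟨Q.coeff 0, by rw [← Polynomial.eq_C_of_natDegree_eq_zero (hQ.trans hq1)]⟩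

theorem ofPolynomialX1_taylor
    {φ : MvPolynomial (Fin (n + 2)) R →ₐ[R] MvPolynomial (Fin (n + 2)) R}
    {a : MvPolynomial (Fin n) R} (h1 : φ (X 1) = X 1 + ofPolynomialX1 (Polynomial.C a))
    (hsucc : ∀ i : Fin n, φ (X i.succ.succ) = X i.succ.succ)
    (Q : Polynomial (MvPolynomial (Fin n) R)) :
    φ (ofPolynomialX1 Q) = ofPolynomialX1 (taylor a Q) := by
  suffices φ.comp ofPolynomialX1 =
      ofPolynomialX1.comp ((Polynomial.taylorAlgHom a).restrictScalars R) from
    AlgHom.congr_fun this Q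
  refine Polynomial.algHom_ext' (algHom_ext fun i => ?_) ?_
  · simp [hsucc]
  · simp [h1]

end CommSemiring

section CommRing

variable {R : Type*} [CommRing R] {n : ℕ}
  {φ : MvPolynomial (Fin (n + 2)) R →ₐ[R] MvPolynomial (Fin (n + 2)) R}
  {a : MvPolynomial (Fin n) R} {G : Polynomial (MvPolynomial (Fin n) R)}

theorem pow_sub_one_apply_ofPolynomialX1
    (hφ : ∀ Q, φ (ofPolynomialX1 Q) = ofPolynomialX1 (taylor a Q)) (j : ℕ)
    (Q : Polynomial (MvPolynomial (Fin n) R)) :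
    ((φ.toLinearMap - 1) ^ j) (ofPolynomialX1 Q) =
      ofPolynomialX1 (((taylor a - 1) ^ j) Q) := by
  induction j generalizing Q with
  | zero => rfl
  | succ j ih => simp [pow_succ, ih, hφ]

theorem pow_succ_sub_one_apply_X_zero (h0 : φ (X 0) = X 0 + ofPolynomialX1 G)
    (hφ : ∀ Q, φ (ofPolynomialX1 Q) = ofPolynomialX1 (taylor a Q)) (j : ℕ) :
    ((φ.toLinearMap - 1) ^ (j + 1)) (X 0) = ofPolynomialX1 (((taylor a - 1) ^ j) G) := by
  rw [pow_succ, Module.End.mul_apply, ← pow_sub_one_apply_ofPolynomialX1 hφ]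
  simp [h0]

theorem pow_sub_one_apply_X_eq_zero (h0 : φ (X 0) = X 0 + ofPolynomialX1 G)
    (hφ : ∀ Q, φ (ofPolynomialX1 Q) = ofPolynomialX1 (taylor a Q)) {j : ℕ}
    (hj : G.natDegree + 2 ≤ j) (i : Fin (n + 2)) : ((φ.toLinearMap - 1) ^ j) (X i) = 0 := by
  obtain ⟨j, rfl⟩ := Nat.exists_eq_add_of_le' (le_of_add_le_right hj)
  induction i using Fin.cases with
  | zero =>
    rw [pow_succ_sub_one_apply_X_zero h0 hφ,
      Polynomial.pow_taylor_sub_one_apply_eq_zero a (by omega), map_zero]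
  | succ i =>
    induction i using Fin.cases with
    | zero =>
      rw [Fin.succ_zero_eq_one, ← ofPolynomialX1_X, pow_sub_one_apply_ofPolynomialX1 hφ,
        Polynomial.pow_taylor_sub_one_apply_eq_zero a
          (Polynomial.natDegree_X_le.trans_lt (by omega)), map_zero]
    | succ i =>
      rw [← ofPolynomialX1_C_X, pow_sub_one_apply_ofPolynomialX1 hφ,
        Polynomial.pow_taylor_sub_one_apply_eq_zero a (by simp), map_zero]

theorem pow_sub_one_apply_X_zero_ne_zero [IsDomain R] [CharZero R]
    (h0 : φ (X 0) = X 0 + ofPolynomialX1 G)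
    (hφ : ∀ Q, φ (ofPolynomialX1 Q) = ofPolynomialX1 (taylor a Q)) (ha : a ≠ 0) (hG : G ≠ 0) :
    ((φ.toLinearMap - 1) ^ (G.natDegree + 1)) (X 0) ≠ 0 := by
  rw [pow_succ_sub_one_apply_X_zero h0 hφ,
    Polynomial.pow_taylor_sub_one_apply_of_natDegree_le a le_rfl, Ne, ← map_zero ofPolynomialX1,
    ofPolynomialX1_injective.eq_iff, Polynomial.C_eq_zero, Polynomial.coeff_natDegree]
  simp [ha, hG, Nat.factorial_ne_zero]

end CommRing

end MvPolynomial

open MvPolynomial in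
/-- Minimal polynomial of a triangular automorphism: let `φ` be the `ℂ`-algebra
endomorphism of `ℂ[X,Y,Z]` with `φ(X) = X + g(Y,Z)`, `φ(Y) = Y + h(Z)`, `φ(Z) = Z`,
where `g ≠ 0` does not involve `X` and `h ≠ 0` involves only `Z`, and set
`d := 2 + deg_Y g`. Then `Σ_{m=0}^{d} (−1)^m C(d,m) φ^[m](w) = 0` for each variable `w`,
and no nonzero polynomial `p ∈ ℂ[T]` of degree `< d` satisfies
`Σ_m (coeff m p) φ^[m](w) = 0` for all variables `w`; i.e. `μ_F(T) = (T − 1)^d`. -/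
theorem triangular_automorphism_minimal_polynomial
    (g h : MvPolynomial (Fin 3) ℂ) (hgne : g ≠ 0) (hhne : h ≠ 0)
    (hg : g.degreeOf 0 = 0)
    (hh0 : h.degreeOf 0 = 0) (hh1 : h.degreeOf 1 = 0)
    (d : ℕ) (hd : d = 2 + g.degreeOf 1)
    (φ : MvPolynomial (Fin 3) ℂ →ₐ[ℂ] MvPolynomial (Fin 3) ℂ)
    (hφX : φ (X 0) = X 0 + g)
    (hφY : φ (X 1) = X 1 + h)
    (hφZ : φ (X 2) = X 2) :
    (∀ i : Fin 3,
        ∑ m ∈ Finset.range (d + 1),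
          ((-1 : ℂ) ^ m * (d.choose m : ℂ)) • (⇑φ)^[m] (X i) = 0) ∧
      ∀ p : Polynomial ℂ, p ≠ 0 → p.natDegree < d →
        ∃ i : Fin 3,
          ∑ m ∈ Finset.range (p.natDegree + 1),
            p.coeff m • (⇑φ)^[m] (X i) ≠ 0 := by
  obtain ⟨a, rfl⟩ := exists_ofPolynomialX1_C_eq hh0 hh1
  obtain ⟨G, rfl, hG⟩ := exists_ofPolynomialX1_eq hg
  have ha : a ≠ 0 := by rintro rfl; simp at hhne
  have hG0 : G ≠ 0 := by rintro rfl; simp at hgne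
  have hφ := ofPolynomialX1_taylor hφY (Fin.forall_fin_one.2 hφZ)
  have hkill : ∀ i, ((φ.toLinearMap - 1) ^ d) (X i) = 0 :=
    pow_sub_one_apply_X_eq_zero hφX hφ (by omega)
  have haeval : ∀ k, Polynomial.aeval φ.toLinearMap
      ((Polynomial.X - Polynomial.C 1 : Polynomial ℂ) ^ k) = (φ.toLinearMap - 1) ^ k := by
    simp
  rw [← AlgHom.coe_toLinearMap φ]
  refine ⟨fun i => ?_, fun p hp hpd => ⟨0, ?_⟩⟩
  · rw [Module.End.sum_range_neg_one_pow_mul_choose_smul_iterate, hkill, smul_zero]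
  · rw [Module.End.sum_range_coeff_smul_iterate_eq_aeval_apply]
    refine Module.End.aeval_apply_ne_zero_of_natDegree_lt (Polynomial.prime_X_sub_C 1)
      (k := G.natDegree + 1) ?_ ?_ hp ?_
    · rw [haeval]
      exact pow_sub_one_apply_X_zero_ne_zero hφX hφ ha hG0
    · rw [haeval, show G.natDegree + 1 + 1 = d by omega, hkill]
    · rw [Polynomial.natDegree_X_sub_C]
      omega
end
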